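/- Under the LATE assumptions and EMCO, for any d > 0 with P(D(1)=d>D(0)=0) > 0, the treated mean for d-type compliers is identified: (E[Y·1(D=d)|Z=1]−E[Y·1(D=d)|Z=0])/(P(D=d|Z=1)−P(D=d|Z=0)) = E[Y(d) | D(1)=d, D(0)=0]. -/

import Mathlib

open MeasureTheory ProbabilityTheory

variable {Ω : Type*}

/-- probability of a set -/
noncomputable def pr [MeasurableSpace Ω] (μ : MeasureTheory.Measure Ω) (A : Set Ω) : ℝ :=
  (μ A).toReal

/-- conditional probability P(A | B) -/
noncomputable def cP [MeasurableSpace Ω] (μ : MeasureTheory.Measure Ω) (A B : Set Ω) : ℝ :=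
  pr μ (A ∩ B) / pr μ B

/-- conditional expectation E[f | B] -/
noncomputable def cE [MeasurableSpace Ω] (μ : MeasureTheory.Measure Ω) (f : Ω → ℝ) (B : Set Ω) : ℝ :=
  (∫ ω in B, f ω ∂μ) / pr μ B

/-- observed treatment D = Z·D(1) + (1−Z)·D(0) -/
def obsD (Z D0 D1 : Ω → ℕ) : Ω → ℕ := fun ω => if Z ω = 1 then D1 ω else D0 ω

/-- observed outcome Y = Y(D) -/
noncomputable def obsY (Z D0 D1 : Ω → ℕ) (Yp : ℕ → Ω → ℝ) : Ω → ℝ :=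
  fun ω => Yp (obsD Z D0 D1 ω) ω

/-! Since `Z` is independent of `(D(0), D(1), Y(d))`, conditioning on `Z = 1` (resp. `Z = 0`)
turns the observed `D` into `D(1)` (resp. `D(0)`) and then has no further effect, so the Wald
numerator is `E[Y(d) (1{D(1) = d} - 1{D(0) = d})]`, and the denominator is the same expression
with `Y(d)` replaced by `1`. Under monotonicity and EMCO, `D(0) = d > 0` forces `D(1) = d`, so
`1{D(1) = d} - 1{D(0) = d} = 1{D(1) = d, D(0) = 0}` almost surely. -/

lemma ite_obsD_obsY_eq_indicator (Z D0 D1 : Ω → ℕ) (Yp : ℕ → Ω → ℝ) (d : ℕ) :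
    (fun ω => if obsD Z D0 D1 ω = d then obsY Z D0 D1 Yp ω else 0)
      = {ω | obsD Z D0 D1 ω = d}.indicator (Yp d) := by
  funext ω
  by_cases h : obsD Z D0 D1 ω = d <;> simp [obsY, h]

section Identification

variable [MeasurableSpace Ω] {μ : Measure Ω}

lemma pr_eq_measureReal (A : Set Ω) : pr μ A = μ.real A := rfl

lemma cP_eq_cE_indicator_one {A : Set Ω} (hA : MeasurableSet A) (B : Set Ω) :
    cP μ A B = cE μ (A.indicator 1) B := by
  rw [cP, cE, integral_indicator_one hA, measureReal_restrict_apply hA]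
  rfl

lemma cE_congr {f g : Ω → ℝ} {B : Set Ω} (hB : MeasurableSet B) (hfg : Set.EqOn f g B) :
    cE μ f B = cE μ g B := by
  rw [cE, cE, setIntegral_congr_fun hB hfg]

lemma _root_.ProbabilityTheory.IndepFun.setIntegral_preimage_eq_mul {β : Type*} [MeasurableSpace β]
    {X : Ω → ℝ} {Z : Ω → β} (hXZ : IndepFun X Z μ)
    (hX : AEStronglyMeasurable X μ) (hZ : Measurable Z) {s : Set β} (hs : MeasurableSet s) :
    ∫ ω in Z ⁻¹' s, X ω ∂μ = (∫ ω, X ω ∂μ) * μ.real (Z ⁻¹' s) := by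
  have hind : IndepFun X ((Z ⁻¹' s).indicator 1) μ :=
    hXZ.comp measurable_id (measurable_one.indicator hs : Measurable (s.indicator (1 : β → ℝ)))
  calc ∫ ω in Z ⁻¹' s, X ω ∂μ = ∫ ω, X ω * (Z ⁻¹' s).indicator 1 ω ∂μ := by
        rw [← integral_indicator (hZ hs)]
        congr 1 with ω
        by_cases h : ω ∈ Z ⁻¹' s <;> simp [h]
    _ = (∫ ω, X ω ∂μ) * μ.real (Z ⁻¹' s) := by
        rw [hind.integral_fun_mul_eq_mul_integral hX
          (aestronglyMeasurable_one.indicator (hZ hs)), integral_indicator_one (hZ hs)]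

lemma cE_preimage_eq_integral_of_indepFun {β : Type*} [MeasurableSpace β]
    {X : Ω → ℝ} {Z : Ω → β} (hXZ : IndepFun X Z μ) (hX : AEStronglyMeasurable X μ)
    (hZ : Measurable Z) {s : Set β} (hs : MeasurableSet s) (hpos : pr μ (Z ⁻¹' s) ≠ 0) :
    cE μ X (Z ⁻¹' s) = ∫ ω, X ω ∂μ := by
  rw [cE, hXZ.setIntegral_preimage_eq_mul hX hZ hs, ← pr_eq_measureReal,
    mul_div_cancel_right₀ _ hpos]

lemma indicator_sub_indicator_ae_eq_indicator_compliers {D0 D1 : Ω → ℕ}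
    (hmono : ∀ᵐ ω ∂μ, D0 ω ≤ D1 ω) (hemco : ∀ᵐ ω ∂μ, D0 ω < D1 ω → D0 ω = 0)
    {d : ℕ} (hd : 0 < d) (f : Ω → ℝ) :
    {ω | D1 ω = d}.indicator f - {ω | D0 ω = d}.indicator f
      =ᵐ[μ] {ω | D1 ω = d ∧ D0 ω = 0}.indicator f := by
  filter_upwards [hmono, hemco] with ω hle hzero
  simp only [Pi.sub_apply, Set.indicator_apply, Set.mem_ofPred_eq]
  split_ifs <;> first | omega | simp

lemma integral_indicator_sub_integral_indicator_eq_setIntegral_compliers {D0 D1 : Ω → ℕ}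
    (hD0m : Measurable D0) (hD1m : Measurable D1)
    (hmono : ∀ᵐ ω ∂μ, D0 ω ≤ D1 ω) (hemco : ∀ᵐ ω ∂μ, D0 ω < D1 ω → D0 ω = 0)
    {d : ℕ} (hd : 0 < d) {f : Ω → ℝ} (hf : Integrable f μ) :
    ∫ ω, {ω | D1 ω = d}.indicator f ω ∂μ - ∫ ω, {ω | D0 ω = d}.indicator f ω ∂μ
      = ∫ ω in {ω | D1 ω = d ∧ D0 ω = 0}, f ω ∂μ := by
  have hD1 : MeasurableSet {ω | D1 ω = d} := hD1m (measurableSet_singleton d)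
  have hD0 : MeasurableSet {ω | D0 ω = d} := hD0m (measurableSet_singleton d)
  have hC : MeasurableSet {ω | D1 ω = d ∧ D0 ω = 0} := hD1.inter (hD0m (measurableSet_singleton 0))
  rw [← integral_sub (hf.indicator hD1) (hf.indicator hD0), ← integral_indicator hC]
  exact integral_congr_ae (indicator_sub_indicator_ae_eq_indicator_compliers hmono hemco hd f)

lemma cE_indicator_preimage_eq_integral_of_indepFun {D : Ω → ℕ} {f : Ω → ℝ}
    {β : Type*} [MeasurableSpace β] {Z : Ω → β} (hD : Measurable D) (hf : AEStronglyMeasurable f μ)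
    (hindep : IndepFun (fun ω => (D ω, f ω)) Z μ) (hZ : Measurable Z) {s : Set β}
    (hs : MeasurableSet s) (hpos : pr μ (Z ⁻¹' s) ≠ 0) (d : ℕ) :
    cE μ ({ω | D ω = d}.indicator f) (Z ⁻¹' s) = ∫ ω, {ω | D ω = d}.indicator f ω ∂μ := by
  have hφ : Measurable ({p : ℕ × ℝ | p.1 = d}.indicator Prod.snd) :=
    measurable_snd.indicator (measurable_fst (measurableSet_singleton d))
  exact cE_preimage_eq_integral_of_indepFun (hindep.comp hφ measurable_id)
    (hf.indicator (hD (measurableSet_singleton d))) hZ hs hpos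

lemma measurable_obsD {Z D0 D1 : Ω → ℕ} (hZm : Measurable Z) (hD0m : Measurable D0)
    (hD1m : Measurable D1) : Measurable (obsD Z D0 D1) :=
  Measurable.ite (hZm (measurableSet_singleton 1)) hD1m hD0m

lemma pr_setOf_eq_zero_eq_one_sub [IsProbabilityMeasure μ] {Z : Ω → ℕ} (hZm : Measurable Z)
    (hZ01 : ∀ ω, Z ω = 0 ∨ Z ω = 1) : pr μ {ω | Z ω = 0} = 1 - pr μ {ω | Z ω = 1} := by
  have hcompl : {ω | Z ω = 0} = {ω | Z ω = 1}ᶜ := by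
    ext ω
    have := hZ01 ω
    simp only [Set.mem_ofPred_eq, Set.mem_compl_iff]
    omega
  rw [pr_eq_measureReal, pr_eq_measureReal, hcompl]
  exact probReal_compl_eq_one_sub (hZm (measurableSet_singleton 1))

lemma cE_indicator_obsD_sub_eq_setIntegral_compliers {Z D0 D1 : Ω → ℕ} {f : Ω → ℝ}
    (hZm : Measurable Z) (hD0m : Measurable D0) (hD1m : Measurable D1) (hf : Integrable f μ)
    (hindep : IndepFun (fun ω => (D0 ω, D1 ω, f ω)) Z μ)
    (hmono : ∀ᵐ ω ∂μ, D0 ω ≤ D1 ω) (hemco : ∀ᵐ ω ∂μ, D0 ω < D1 ω → D0 ω = 0)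
    (hZ1 : pr μ {ω | Z ω = 1} ≠ 0) (hZ0 : pr μ {ω | Z ω = 0} ≠ 0) {d : ℕ} (hd : 0 < d) :
    cE μ ({ω | obsD Z D0 D1 ω = d}.indicator f) {ω | Z ω = 1}
        - cE μ ({ω | obsD Z D0 D1 ω = d}.indicator f) {ω | Z ω = 0}
      = ∫ ω in {ω | D1 ω = d ∧ D0 ω = 0}, f ω ∂μ := by
  have hS1 : MeasurableSet {ω | Z ω = 1} := hZm (measurableSet_singleton 1)
  have hS0 : MeasurableSet {ω | Z ω = 0} := hZm (measurableSet_singleton 0)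
  have hD1f : IndepFun (fun ω => (D1 ω, f ω)) Z μ :=
    hindep.comp (φ := fun p => (p.2.1, p.2.2)) (by fun_prop) measurable_id
  have hD0f : IndepFun (fun ω => (D0 ω, f ω)) Z μ :=
    hindep.comp (φ := fun p => (p.1, p.2.2)) (by fun_prop) measurable_id
  have hon1 : Set.EqOn ({ω | obsD Z D0 D1 ω = d}.indicator f) ({ω | D1 ω = d}.indicator f)
      {ω | Z ω = 1} := fun ω (hω : Z ω = 1) => by
    simp [Set.indicator_apply, obsD, hω]
  have hon0 : Set.EqOn ({ω | obsD Z D0 D1 ω = d}.indicator f) ({ω | D0 ω = d}.indicator f)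
      {ω | Z ω = 0} := fun ω (hω : Z ω = 0) => by
    simp [Set.indicator_apply, obsD, hω]
  have hcE1 : cE μ ({ω | D1 ω = d}.indicator f) {ω | Z ω = 1}
      = ∫ ω, {ω | D1 ω = d}.indicator f ω ∂μ :=
    cE_indicator_preimage_eq_integral_of_indepFun hD1m hf.1 hD1f hZm
      (measurableSet_singleton 1) hZ1 d
  have hcE0 : cE μ ({ω | D0 ω = d}.indicator f) {ω | Z ω = 0}
      = ∫ ω, {ω | D0 ω = d}.indicator f ω ∂μ :=
    cE_indicator_preimage_eq_integral_of_indepFun hD0m hf.1 hD0f hZm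
      (measurableSet_singleton 0) hZ0 d
  rw [cE_congr hS1 hon1, cE_congr hS0 hon0, hcE1, hcE0,
    integral_indicator_sub_integral_indicator_eq_setIntegral_compliers hD0m hD1m hmono hemco hd hf]

end Identification

theorem dtype_complier_treated_mean_identified_general
    [MeasurableSpace Ω] (μ : MeasureTheory.Measure Ω) [IsProbabilityMeasure μ]
    (Z D0 D1 : Ω → ℕ) (Yp : ℕ → Ω → ℝ)
    (hZ01 : ∀ ω, Z ω = 0 ∨ Z ω = 1)
    (hZm : Measurable Z) (hD0m : Measurable D0) (hD1m : Measurable D1)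
    (hYint : ∀ d, Integrable (Yp d) μ)
    (hindep : IndepFun (fun ω => (D0 ω, D1 ω, fun d => Yp d ω)) Z μ)
    (hmono : ∀ᵐ ω ∂μ, D0 ω ≤ D1 ω)
    (hemco : ∀ᵐ ω ∂μ, D0 ω < D1 ω → D0 ω = 0)
    (hZ1pos : 0 < pr μ {ω | Z ω = 1}) (hZ1lt : pr μ {ω | Z ω = 1} < 1)
    (d : ℕ) (hd : 0 < d) :
    (cE μ (fun ω => if obsD Z D0 D1 ω = d then obsY Z D0 D1 Yp ω else 0) {ω | Z ω = 1} -
      cE μ (fun ω => if obsD Z D0 D1 ω = d then obsY Z D0 D1 Yp ω else 0) {ω | Z ω = 0}) /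
      (cP μ {ω | obsD Z D0 D1 ω = d} {ω | Z ω = 1} -
        cP μ {ω | obsD Z D0 D1 ω = d} {ω | Z ω = 0}) =
    cE μ (Yp d) {ω | D1 ω = d ∧ D0 ω = 0} := by
  have hZ1 : pr μ {ω | Z ω = 1} ≠ 0 := hZ1pos.ne'
  have hZ0 : pr μ {ω | Z ω = 0} ≠ 0 := by
    rw [pr_setOf_eq_zero_eq_one_sub hZm hZ01]
    linarith
  have hobsD : MeasurableSet {ω | obsD Z D0 D1 ω = d} :=
    measurable_obsD hZm hD0m hD1m (measurableSet_singleton d)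
  have hindY : IndepFun (fun ω => (D0 ω, D1 ω, Yp d ω)) Z μ :=
    hindep.comp (φ := fun p => (p.1, p.2.1, p.2.2 d)) (by fun_prop) measurable_id
  have hind1 : IndepFun (fun ω => (D0 ω, D1 ω, (1 : Ω → ℝ) ω)) Z μ :=
    hindep.comp (φ := fun p => (p.1, p.2.1, 1)) (by fun_prop) measurable_id
  rw [ite_obsD_obsY_eq_indicator, cP_eq_cE_indicator_one hobsD, cP_eq_cE_indicator_one hobsD,
    cE_indicator_obsD_sub_eq_setIntegral_compliers hZm hD0m hD1m (hYint d) hindY hmono hemco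
      hZ1 hZ0 hd,
    cE_indicator_obsD_sub_eq_setIntegral_compliers hZm hD0m hD1m (f := 1) (integrable_const 1)
      hind1 hmono hemco hZ1 hZ0 hd]
  simp [cE, pr_eq_measureReal]

/-- identification of the treated mean for d-type compliers. -/
theorem dtype_complier_treated_mean_identified
    [MeasurableSpace Ω] (μ : MeasureTheory.Measure Ω) [IsProbabilityMeasure μ]
    (Dbar : ℕ) (Z D0 D1 : Ω → ℕ) (Yp : ℕ → Ω → ℝ)
    (hZ01 : ∀ ω, Z ω = 0 ∨ Z ω = 1)
    (hZm : Measurable Z) (hD0m : Measurable D0) (hD1m : Measurable D1)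
    (hD0b : ∀ ω, D0 ω ≤ Dbar) (hD1b : ∀ ω, D1 ω ≤ Dbar)
    (hYm : ∀ d, Measurable (Yp d)) (hYint : ∀ d, Integrable (Yp d) μ)
    (hindep : IndepFun (fun ω => (D0 ω, D1 ω, fun d => Yp d ω)) Z μ)
    (hmono : ∀ᵐ ω ∂μ, D0 ω ≤ D1 ω)
    (hemco : ∀ᵐ ω ∂μ, D0 ω < D1 ω → D0 ω = 0)
    (hZ1pos : 0 < pr μ {ω | Z ω = 1}) (hZ1lt : pr μ {ω | Z ω = 1} < 1)
    (d : ℕ) (hd : 0 < d)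
    (hdcomp : 0 < pr μ {ω | D1 ω = d ∧ D0 ω = 0}) :
    (cE μ (fun ω => if obsD Z D0 D1 ω = d then obsY Z D0 D1 Yp ω else 0) {ω | Z ω = 1} -
      cE μ (fun ω => if obsD Z D0 D1 ω = d then obsY Z D0 D1 Yp ω else 0) {ω | Z ω = 0}) /
      (cP μ {ω | obsD Z D0 D1 ω = d} {ω | Z ω = 1} -
        cP μ {ω | obsD Z D0 D1 ω = d} {ω | Z ω = 0}) =
    cE μ (Yp d) {ω | D1 ω = d ∧ D0 ω = 0} :=
  dtype_complier_treated_mean_identified_general μ Z D0 D1 Yp hZ01 hZm hD0m hD1m hYint hindep hmono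
    hemco hZ1pos hZ1lt d hd
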